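/- arXiv:2302.10041 — 3 statements merged into one kernel-verified Lean document; each statement's English description precedes it below -/
import Mathlib

section
/- Let S be a simple symmetric random walk on ℤ started at 0, with increments X_i satisfying P(X_i = 1) = P(X_i = -1) = 1/2, independent. Let ξ(i,n) = #{1 ≤ j ≤ n : S_j = i} be its local time, let I(i,ℓ) be the indicator that S_ℓ ∈ {i, i+1}, and define D(i,n) = ξ(i+1,n) - ξ(i,n) - Σ_{ℓ=0}^{n} I(i,ℓ) X_{ℓ+1}. Then |D(i,n)| ≤ 2 for all i ∈ ℤ and n ≥ 0. -/
/-!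
The quantity telescopes. Along a step `s ↦ s + x` with `x = ±1`, the increment
`[s + x = i + 1] - [s + x = i] - [s ∈ {i, i + 1}] x` of `D(i, ·)` equals `φ(s + x) - φ(s)` for the
potential `φ(s) = -[i ≤ s] - [i + 2 ≤ s]`. Hence
`D(i, n) = φ(S_{n+1}) - [S_{n+1} = i + 1] + [S_{n+1} = i] - φ(0) = -2 [i < S_{n+1}] - φ(0)`,
and `φ` takes values in `[-2, 0]`.
-/

open Finset

namespace LocalTime

def potential (i s : ℤ) : ℤ := -(if i ≤ s then 1 else 0) - (if i + 2 ≤ s then 1 else 0)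

lemma potential_add_step (i s x : ℤ) (hx : x = 1 ∨ x = -1) :
    (if s + x = i + 1 then 1 else 0) - (if s + x = i then 1 else 0) -
      (if s = i ∨ s = i + 1 then 1 else 0) * x = potential i (s + x) - potential i s := by
  unfold potential
  rcases hx with rfl | rfl <;> split_ifs <;> omega

lemma potential_sub_indicator_add_indicator (i s : ℤ) :
    potential i s - (if s = i + 1 then 1 else 0) + (if s = i then 1 else 0) =
      -2 * if i < s then 1 else 0 := by
  unfold potential
  split_ifs <;> omega

lemma potential_mem_Icc (i s : ℤ) : potential i s ∈ Set.Icc (-2) 0 := by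
  unfold potential
  constructor <;> split_ifs <;> omega

lemma card_filter_Icc_one_eq_sum_range (f : ℕ → ℤ) (a : ℤ) (n : ℕ) :
    (#{j ∈ Icc 1 n | f j = a} : ℤ) = ∑ ℓ ∈ range n, if f (ℓ + 1) = a then 1 else 0 := by
  rw [range_eq_Ico, sum_Ico_add' (fun j => if f j = a then (1 : ℤ) else 0), zero_add,
    Ico_add_one_right_eq_Icc, card_filter]
  push_cast
  rfl

theorem visit_diff_sub_sum_eq_potential_sub {X S : ℕ → ℤ} (hX : ∀ k, X k = 1 ∨ X k = -1)
    (hstep : ∀ ℓ, S (ℓ + 1) = S ℓ + X (ℓ + 1)) (i : ℤ) (m : ℕ) :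
    (#{j ∈ Icc 1 m | S j = i + 1} : ℤ) - #{j ∈ Icc 1 m | S j = i} -
        ∑ ℓ ∈ range m, (if S ℓ = i ∨ S ℓ = i + 1 then 1 else 0) * X (ℓ + 1) =
      potential i (S m) - potential i (S 0) := by
  rw [card_filter_Icc_one_eq_sum_range, card_filter_Icc_one_eq_sum_range, ← sum_sub_distrib,
    ← sum_sub_distrib, ← sum_range_sub (fun ℓ => potential i (S ℓ))]
  refine sum_congr rfl fun ℓ _ => ?_
  rw [hstep]
  exact potential_add_step i (S ℓ) (X (ℓ + 1)) (hX (ℓ + 1))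

end LocalTime

open LocalTime in
/-- For a simple symmetric walk with ±1 increments, the quantity
`D(i,n) = ξ(i+1,n) - ξ(i,n) - Σ_{ℓ=0}^{n} I(i,ℓ) X_{ℓ+1}` satisfies `|D(i,n)| ≤ 2`. -/
theorem local_time_difference_bound
    (X : ℕ → ℤ) (hX : ∀ k, X k = 1 ∨ X k = -1)
    (S : ℕ → ℤ) (hS : ∀ n, S n = ∑ k ∈ Finset.range n, X (k + 1))
    (ξ : ℤ → ℕ → ℕ)
    (hξ : ∀ i n, ξ i n = ((Finset.Icc 1 n).filter (fun j => S j = i)).card)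
    (I : ℤ → ℕ → ℤ)
    (hI : ∀ i ℓ, I i ℓ = if S ℓ = i ∨ S ℓ = i + 1 then 1 else 0)
    (i : ℤ) (n : ℕ) :
    |(ξ (i + 1) n : ℤ) - (ξ i n : ℤ) - ∑ ℓ ∈ Finset.range (n + 1), I i ℓ * X (ℓ + 1)| ≤ 2 := by
  have hstep : ∀ ℓ, S (ℓ + 1) = S ℓ + X (ℓ + 1) := fun ℓ => by rw [hS, hS, sum_range_succ]
  have hS0 : S 0 = 0 := by rw [hS, sum_range_zero]
  have htelescope := visit_diff_sub_sum_eq_potential_sub hX hstep i (n + 1)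
  rw [card_filter_Icc_one_eq_sum_range, card_filter_Icc_one_eq_sum_range, sum_range_succ,
    sum_range_succ, hS0] at htelescope
  rw [hξ, hξ, card_filter_Icc_one_eq_sum_range, card_filter_Icc_one_eq_sum_range]
  simp_rw [hI]
  have hendpoint := potential_sub_indicator_add_indicator i (S (n + 1))
  obtain ⟨hlo, hhi⟩ := potential_mem_Icc i 0
  rw [abs_le]
  split_ifs at htelescope hendpoint <;> constructor <;> linarith
end

section
/- Let S be a simple symmetric random walk on ℤ with local time ξ(i,n) = #{1 ≤ j ≤ n : S_j = i}. Then for every i ∈ ℤ and n ≥ 0, |E(ξ(i+1,n)) − E(ξ(i,n))| ≤ 2. -/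
/-!
Along a path with ±1 steps, the local times at adjacent levels satisfy a discrete Tanaka formula
`ξ(i+1,n) - ξ(i,n) = ∑_{ℓ<n} 1[S_ℓ ∈ {i, i+1}] X_{ℓ+1} + g(S_n) - g(S_0)`, where
`g(m) = -[i ≤ m] - [i + 2 ≤ m]` takes values in `{0, -1, -2}`. Each summand has mean zero, since
`S_ℓ` is independent of `X_{ℓ+1}` and `E X_{ℓ+1} = 0`, so the expected difference of the local
times is `E(g(S_n) - g(S_0))`, which is at most `2` in absolute value.
-/

open MeasureTheory ProbabilityTheory Finset

def localTime (s : ℕ → ℤ) (i : ℤ) (n : ℕ) : ℕ := #{j ∈ Icc 1 n | s j = i}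

namespace localTime

variable (s : ℕ → ℤ) (i : ℤ) (n : ℕ)

lemma succ : localTime s i (n + 1) = localTime s i n + if s (n + 1) = i then 1 else 0 := by
  rw [localTime, ← insert_Icc_right_eq_Icc_add_one (by omega), filter_insert]
  split_ifs
  · exact card_insert_of_notMem fun h => by simp at h
  · rfl

lemma le : localTime s i n ≤ n :=
  (card_filter_le _ _).trans (by simp)

lemma eq_sum : localTime s i n = ∑ j ∈ Icc 1 n, if s j = i then 1 else 0 :=
  card_filter _ _

end localTime

def pairIndicator (i m : ℤ) : ℤ := if m = i ∨ m = i + 1 then 1 else 0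

def tanakaCorrection (i m : ℤ) : ℤ := -(if i ≤ m then 1 else 0) - if i + 2 ≤ m then 1 else 0

lemma abs_tanakaCorrection_sub_le (i m m' : ℤ) :
    |tanakaCorrection i m - tanakaCorrection i m'| ≤ 2 := by
  rw [abs_le, tanakaCorrection, tanakaCorrection]
  constructor <;> split_ifs <;> omega

lemma tanaka_formula_step (i s x : ℤ) (hx : x = 1 ∨ x = -1) :
    ((if s + x = i + 1 then 1 else 0) - if s + x = i then 1 else 0) =
      pairIndicator i s * x + (tanakaCorrection i (s + x) - tanakaCorrection i s) := by
  unfold pairIndicator tanakaCorrection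
  rcases hx with rfl | rfl <;> split_ifs <;> omega

lemma localTime_add_one_sub_localTime {s x : ℕ → ℤ} (hs : ∀ k, s (k + 1) = s k + x (k + 1))
    (hx : ∀ k, x k = 1 ∨ x k = -1) (i : ℤ) (n : ℕ) :
    (localTime s (i + 1) n : ℤ) - localTime s i n =
      ∑ ℓ ∈ range n, pairIndicator i (s ℓ) * x (ℓ + 1) +
        (tanakaCorrection i (s n) - tanakaCorrection i (s 0)) := by
  induction n with
  | zero => simp [localTime]
  | succ n ih =>
    have step := tanaka_formula_step i (s n) (x (n + 1)) (hx (n + 1))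
    rw [← hs] at step
    push_cast [localTime.succ, sum_range_succ]
    linarith

section Sign

variable {Ω : Type*} [MeasurableSpace Ω] {μ : Measure Ω} [IsProbabilityMeasure μ] {f : Ω → ℤ}

lemma ae_eq_one_or_eq_neg_one_of_measure_eq_half (hf : Measurable f)
    (h₁ : μ {ω | f ω = 1} = 1 / 2) (h₂ : μ {ω | f ω = -1} = 1 / 2) :
    ∀ᵐ ω ∂μ, f ω = 1 ∨ f ω = -1 := by
  have hA : MeasurableSet {ω | f ω = 1} := hf (measurableSet_singleton 1)
  have hB : MeasurableSet {ω | f ω = -1} := hf (measurableSet_singleton (-1))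
  have hdisj : Disjoint {ω | f ω = 1} {ω | f ω = -1} :=
    Set.disjoint_left.2 fun ω h h' => by simp_all
  refine (mem_ae_iff_prob_eq_one (hA.union hB)).2 ?_
  rw [measure_union hdisj hB, h₁, h₂, ENNReal.add_halves]

lemma integral_eq_zero_of_measure_eq_half (hf : Measurable f)
    (h₁ : μ {ω | f ω = 1} = 1 / 2) (h₂ : μ {ω | f ω = -1} = 1 / 2) :
    ∫ ω, (f ω : ℝ) ∂μ = 0 := by
  have hA : MeasurableSet {ω | f ω = 1} := hf (measurableSet_singleton 1)
  have hB : MeasurableSet {ω | f ω = -1} := hf (measurableSet_singleton (-1))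
  have hf' : (fun ω => (f ω : ℝ)) =ᵐ[μ]
      fun ω => {ω | f ω = 1}.indicator 1 ω - {ω | f ω = -1}.indicator 1 ω := by
    filter_upwards [ae_eq_one_or_eq_neg_one_of_measure_eq_half hf h₁ h₂] with ω hω
    rcases hω with h | h <;> simp [h]
  rw [integral_congr_ae hf', integral_sub ((integrable_const 1).indicator hA)
    ((integrable_const 1).indicator hB), integral_indicator_one hA, integral_indicator_one hB,
    measureReal_def, measureReal_def, h₁, h₂, sub_self]

end Sign

lemma ProbabilityTheory.IndepFun.integral_comp_mul_eq_zero {Ω : Type*} [MeasurableSpace Ω]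
    {μ : Measure Ω} {Y Z : Ω → ℤ}
    (hYZ : IndepFun Y Z μ) (hY : Measurable Y) (hZ : Measurable Z)
    (hZ₀ : ∫ ω, (Z ω : ℝ) ∂μ = 0) (φ : ℤ → ℝ) :
    ∫ ω, φ (Y ω) * Z ω ∂μ = 0 := by
  have h := (hYZ.comp (measurable_of_countable φ) (measurable_of_countable (Int.cast : ℤ → ℝ)))
    |>.integral_mul_eq_mul_integral ((measurable_of_countable φ).comp hY).aestronglyMeasurable
      ((measurable_of_countable _).comp hZ).aestronglyMeasurable
  simpa [hZ₀] using h

section Integrability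

variable {Ω : Type*} [MeasurableSpace Ω] {μ : Measure Ω} [IsFiniteMeasure μ]

lemma measurable_localTime {S : ℕ → Ω → ℤ} (hSm : ∀ k, Measurable (S k)) (i : ℤ) (n : ℕ) :
    Measurable fun ω => localTime (S · ω) i n := by
  simp only [localTime.eq_sum]
  exact Finset.measurable_sum _ fun k _ =>
    Measurable.ite ((hSm k) (measurableSet_singleton i)) measurable_const measurable_const

lemma integrable_localTime {S : ℕ → Ω → ℤ} (hSm : ∀ k, Measurable (S k)) (i : ℤ) (n : ℕ) :
    Integrable (fun ω => (localTime (S · ω) i n : ℝ)) μ :=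
  .of_bound ((measurable_of_countable _).comp (measurable_localTime hSm i n)).aestronglyMeasurable
    n (.of_forall fun ω => by simpa using localTime.le (S · ω) i n)

lemma integrable_pairIndicator_mul {Y Z : Ω → ℤ} (hY : Measurable Y) (hZ : Measurable Z)
    (hZ₁ : ∀ᵐ ω ∂μ, Z ω = 1 ∨ Z ω = -1) (i : ℤ) :
    Integrable (fun ω => (pairIndicator i (Y ω) : ℝ) * Z ω) μ := by
  refine .of_bound ?_ 1 ?_
  · exact (((measurable_of_countable fun m => (pairIndicator i m : ℝ)).comp hY).mul
      ((measurable_of_countable fun m : ℤ => (m : ℝ)).comp hZ)).aestronglyMeasurable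
  · filter_upwards [hZ₁] with ω hω
    rcases hω with h | h <;> simp only [h, pairIndicator] <;> split_ifs <;> norm_num

end Integrability

lemma abs_integral_localTime_add_one_sub_le {Ω : Type*} [MeasurableSpace Ω] {μ : Measure Ω}
    [IsProbabilityMeasure μ] {X S : ℕ → Ω → ℤ} (hXm : ∀ k, Measurable (X k))
    (hind : iIndepFun X μ) (hmean : ∀ k, ∫ ω, (X k ω : ℝ) ∂μ = 0)
    (hsign : ∀ᵐ ω ∂μ, ∀ k, X k ω = 1 ∨ X k ω = -1)
    (hS : ∀ n ω, S n ω = ∑ k ∈ range n, X (k + 1) ω) (i : ℤ) (n : ℕ) :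
    |∫ ω, (localTime (S · ω) (i + 1) n : ℝ) ∂μ - ∫ ω, (localTime (S · ω) i n : ℝ) ∂μ| ≤ 2 := by
  have hS' : ∀ ℓ, S ℓ = ∑ k ∈ range ℓ, X (k + 1) := fun ℓ => funext fun ω => by
    rw [hS, Finset.sum_apply]
  have hSm : ∀ ℓ, Measurable (S ℓ) := fun ℓ => by rw [hS']; fun_prop
  have hstep : ∀ k ω, S (k + 1) ω = S k ω + X (k + 1) ω := fun k ω => by
    rw [hS, hS, sum_range_succ]
  have hM : ∀ ℓ, Integrable (fun ω => (pairIndicator i (S ℓ ω) : ℝ) * X (ℓ + 1) ω) μ := fun ℓ =>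
    integrable_pairIndicator_mul (hSm ℓ) (hXm _) (hsign.mono fun _ h => h _) i
  have hindep : ∀ ℓ, IndepFun (S ℓ) (X (ℓ + 1)) μ := fun ℓ =>
    hS' ℓ ▸ (hind.precomp Nat.succ_injective).indepFun_sum_range_succ (hXm ·.succ) ℓ
  have hM₀ : ∀ ℓ, ∫ ω, (pairIndicator i (S ℓ ω) : ℝ) * X (ℓ + 1) ω ∂μ = 0 := fun ℓ =>
    (hindep ℓ).integral_comp_mul_eq_zero (hSm ℓ) (hXm _) (hmean _) fun m => pairIndicator i m
  set D : Ω → ℝ := fun ω => tanakaCorrection i (S n ω) - tanakaCorrection i (S 0 ω)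
  have hD : ∀ ω, ‖D ω‖ ≤ 2 := fun ω => by
    simp only [D, Real.norm_eq_abs]
    exact_mod_cast abs_tanakaCorrection_sub_le i (S n ω) (S 0 ω)
  have hDint : Integrable D μ := by
    refine .of_bound ?_ 2 (.of_forall hD)
    have hg := measurable_of_countable fun m => (tanakaCorrection i m : ℝ)
    exact ((hg.comp (hSm n)).sub (hg.comp (hSm 0))).aestronglyMeasurable
  have hpath : (fun ω => (localTime (S · ω) (i + 1) n : ℝ) - localTime (S · ω) i n) =ᵐ[μ]
      fun ω => ∑ ℓ ∈ range n, (pairIndicator i (S ℓ ω) : ℝ) * X (ℓ + 1) ω + D ω := by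
    filter_upwards [hsign] with ω hω
    simp only [D]
    exact_mod_cast localTime_add_one_sub_localTime (s := (S · ω)) (hstep · ω) hω i n
  rw [← integral_sub (integrable_localTime hSm _ n) (integrable_localTime hSm i n),
    integral_congr_ae hpath, integral_add (integrable_finsetSum _ fun ℓ _ => hM ℓ) hDint,
    integral_finsetSum _ fun ℓ _ => hM ℓ, sum_eq_zero fun ℓ _ => hM₀ ℓ, zero_add]
  simpa using norm_integral_le_of_norm_le_const (μ := μ) (.of_forall hD)

/-- For the simple symmetric random walk with local time `ξ(i,n)`,
`|E(ξ(i+1,n)) − E(ξ(i,n))| ≤ 2`. -/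
theorem expected_local_time_difference_bound
    {Ω : Type*} [MeasureSpace Ω] [IsProbabilityMeasure (ℙ : Measure Ω)]
    (X : ℕ → Ω → ℤ) (hXm : ∀ k, Measurable (X k))
    (hind : iIndepFun X ℙ)
    (hX : ∀ k, ℙ {ω | X k ω = 1} = 1/2 ∧ ℙ {ω | X k ω = -1} = 1/2)
    (S : ℕ → Ω → ℤ) (hS : ∀ n ω, S n ω = ∑ k ∈ Finset.range n, X (k + 1) ω)
    (ξ : ℤ → ℕ → Ω → ℕ)
    (hξ : ∀ i n ω, ξ i n ω = ((Finset.Icc 1 n).filter (fun j => S j ω = i)).card)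
    (i : ℤ) (n : ℕ) :
    |(∫ ω, (ξ (i + 1) n ω : ℝ) ∂ℙ) - ∫ ω, (ξ i n ω : ℝ) ∂ℙ| ≤ 2 := by
  have hsign : ∀ᵐ ω ∂ℙ, ∀ k, X k ω = 1 ∨ X k ω = -1 := ae_all_iff.2 fun k =>
    ae_eq_one_or_eq_neg_one_of_measure_eq_half (hXm k) (hX k).1 (hX k).2
  have hmean : ∀ k, ∫ ω, (X k ω : ℝ) ∂ℙ = 0 := fun k =>
    integral_eq_zero_of_measure_eq_half (hXm k) (hX k).1 (hX k).2
  simp only [hξ]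
  exact abs_integral_localTime_add_one_sub_le hXm hind hmean hsign hS i n
end

section
/- If (1/n) Σ_{j=1}^n 1/p_j → 2γ and (1/n) Σ_{j=1}^n 1/p_{−j} → 2γ as n → ∞ with 0 < p_j ≤ 1/2, then for all real x < y, lim_{T→∞} (1/(y−x)) ∫_x^y 1/p_{⌊Tu⌋} du = 2γ. -/
/-! Put `F t = ∫ u in 0..t, a ⌊u⌋` with `a j = 1 / p j`. On each `[n, n + 1]` the function `F`
interpolates linearly between consecutive partial sums of `a`, and Cesàro convergence of those
sums forces their increments to be `o(n)`; hence `F t / t → 2γ` as `t → ±∞`. The substitution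
`v = T u` turns the average over `[x, y]` into `(F (T y) - F (T x)) / (T (y - x))`. -/

open Filter Topology intervalIntegral MeasureTheory Finset

theorem tendsto_succ_sub_div_of_tendsto_div {S : ℕ → ℝ} {L : ℝ}
    (h : Tendsto (fun n : ℕ => S n / n) atTop (𝓝 L)) :
    Tendsto (fun n : ℕ => (S (n + 1) - S n) / n) atTop (𝓝 0) := by
  have hratio : Tendsto (fun n : ℕ => ((n : ℝ) + 1) / n) atTop (𝓝 1) := by
    simpa using (tendsto_natCast_div_add_atTop (1 : ℝ)).inv₀ one_ne_zero
  have hsucc : Tendsto (fun n : ℕ => S (n + 1) / ((n : ℝ) + 1) * (((n : ℝ) + 1) / n))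
      atTop (𝓝 (L * 1)) := by
    refine Tendsto.mul ?_ hratio
    exact_mod_cast (tendsto_add_atTop_iff_nat 1).2 h
  rw [mul_one] at hsucc
  have hdiff := hsucc.sub h
  rw [sub_self] at hdiff
  refine hdiff.congr fun n => ?_
  rw [div_mul_div_cancel₀ (Nat.cast_add_one_ne_zero n), sub_div]

theorem tendsto_const_add_div_succ_of_tendsto_div {S : ℕ → ℝ} {L : ℝ} (c : ℝ)
    (h : Tendsto (fun n : ℕ => S n / n) atTop (𝓝 L)) :
    Tendsto (fun n : ℕ => (c + S n) / ((n : ℝ) + 1)) atTop (𝓝 L) := by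
  have hc : Tendsto (fun n : ℕ => c / ((n : ℝ) + 1)) atTop (𝓝 0) :=
    tendsto_const_nhds.div_atTop (tendsto_natCast_atTop_atTop.atTop_add tendsto_const_nhds)
  have hsum := hc.add (h.mul (tendsto_natCast_div_add_atTop (1 : ℝ)))
  rw [zero_add, mul_one] at hsum
  refine hsum.congr' ?_
  filter_upwards [eventually_ne_atTop 0] with n hn
  have hn0 : (n : ℝ) ≠ 0 := Nat.cast_ne_zero.2 hn
  field_simp

theorem tendsto_div_atTop_of_tendsto_natCast_div {G : ℝ → ℝ} {L : ℝ}
    (hG : Tendsto (fun n : ℕ => G n / n) atTop (𝓝 L))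
    (hstep : ∀ (n : ℕ) (t : ℝ), n ≤ t → t ≤ n + 1 → |G t - G n| ≤ |G (n + 1) - G n|) :
    Tendsto (fun t => G t / t) atTop (𝓝 L) := by
  have hinc : Tendsto (fun n : ℕ => (G (n + 1) - G n) / n) atTop (𝓝 0) := by
    exact_mod_cast tendsto_succ_sub_div_of_tendsto_div hG
  have hmain : Tendsto (fun t : ℝ => G ⌊t⌋₊ / ⌊t⌋₊ * (⌊t⌋₊ / t)) atTop (𝓝 (L * 1)) :=
    (hG.comp tendsto_nat_floor_atTop).mul tendsto_nat_floor_div_atTop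
  have herr : Tendsto (fun t : ℝ => (G t - G ⌊t⌋₊) / t) atTop (𝓝 0) := by
    refine squeeze_zero_norm' ?_ (by simpa using (hinc.comp tendsto_nat_floor_atTop).norm)
    filter_upwards [eventually_ge_atTop 1] with t ht
    have hn : (1 : ℝ) ≤ ⌊t⌋₊ := by exact_mod_cast (Nat.one_le_floor_iff t).2 ht
    simp only [Real.norm_eq_abs, abs_div, abs_of_pos (by linarith : (0 : ℝ) < t)]
    exact div_le_div₀ (abs_nonneg _) (hstep _ t (Nat.floor_le (by linarith))
      (Nat.lt_floor_add_one t).le) (by linarith) (Nat.floor_le (by linarith))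
  have hsum := hmain.add herr
  rw [mul_one, add_zero] at hsum
  refine hsum.congr' ?_
  filter_upwards [eventually_ge_atTop 1] with t ht
  have hn : (1 : ℝ) ≤ ⌊t⌋₊ := by exact_mod_cast (Nat.one_le_floor_iff t).2 ht
  field_simp
  ring

theorem tendsto_comp_mul_div_atTop {F : ℝ → ℝ} {L : ℝ}
    (htop : Tendsto (fun t => F t / t) atTop (𝓝 L))
    (hbot : Tendsto (fun t => F t / t) atBot (𝓝 L))
    (c : ℝ) : Tendsto (fun T => F (T * c) / T) atTop (𝓝 (L * c)) := by
  rcases eq_or_ne c 0 with rfl | hc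
  · simpa using tendsto_const_nhds.div_atTop tendsto_id
  have hscaled : Tendsto (fun T => F (T * c) / (T * c)) atTop (𝓝 L) := by
    rcases hc.lt_or_gt with hneg | hpos
    · exact hbot.comp (tendsto_id.atTop_mul_const_of_neg hneg)
    · exact htop.comp (tendsto_id.atTop_mul_const hpos)
  refine (hscaled.mul_const c).congr' ?_
  filter_upwards [eventually_ne_atTop 0] with T hT
  field_simp

section FloorStep

variable (a : ℤ → ℝ)

theorem intervalIntegrable_comp_floor (s t : ℝ) :
    IntervalIntegrable (fun u => a ⌊u⌋) volume s t := by
  rw [intervalIntegrable_iff]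
  have hmeas : Measurable fun u : ℝ => a ⌊u⌋ :=
    (measurable_of_countable a).comp Int.measurable_floor
  have hne : (Icc ⌊s ⊓ t⌋ ⌊s ⊔ t⌋).Nonempty :=
    nonempty_Icc.2 (Int.floor_le_floor inf_le_sup)
  refine Measure.integrableOn_of_bounded (M := (Icc ⌊s ⊓ t⌋ ⌊s ⊔ t⌋).sup' hne (|a ·|))
    measure_Ioc_lt_top.ne hmeas.aestronglyMeasurable ?_
  filter_upwards [ae_restrict_mem measurableSet_uIoc] with u hu
  exact le_sup' (|a ·|)
    (mem_Icc.2 ⟨Int.floor_le_floor hu.1.le, Int.floor_le_floor hu.2⟩)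

theorem integral_comp_floor_of_le_of_le {k : ℤ} {s t : ℝ} (hks : k ≤ s) (hst : s ≤ t)
    (htk : t ≤ k + 1) : ∫ u in s..t, a ⌊u⌋ = (t - s) * a k := by
  rw [integral_of_le hst, integral_Ioc_eq_integral_Ioo,
    setIntegral_congr_fun measurableSet_Ioo (g := fun _ => a k) fun u hu => ?_]
  · simp [hst]
  · simp only [Int.floor_eq_iff.2 ⟨hks.trans hu.1.le, hu.2.trans_le htk⟩]

theorem integral_comp_floor_zero_natCast (n : ℕ) :
    ∫ u in (0 : ℝ)..n, a ⌊u⌋ = ∑ j ∈ range n, a j := by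
  induction n with
  | zero => simp
  | succ n ih =>
    rw [← integral_add_adjacent_intervals (b := n) (intervalIntegrable_comp_floor a _ _)
      (intervalIntegrable_comp_floor a _ _), ih, sum_range_succ,
      integral_comp_floor_of_le_of_le a (k := n) (by simp) (by simp) (by simp)]
    simp

theorem integral_comp_floor_neg_natCast_zero (n : ℕ) :
    ∫ u in (-n : ℝ)..0, a ⌊u⌋ = ∑ j ∈ Icc 1 n, a (-j) := by
  induction n with
  | zero => simp
  | succ n ih =>
    rw [← integral_add_adjacent_intervals (b := -n) (intervalIntegrable_comp_floor a _ _)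
      (intervalIntegrable_comp_floor a _ _), ih, sum_Icc_succ_top (by omega),
      integral_comp_floor_of_le_of_le a (k := -(n + 1)) (by simp) (by simp) (by simp)]
    push_cast
    ring

variable {a} {L : ℝ}

theorem tendsto_integral_comp_floor_div_atTop
    (h : Tendsto (fun n : ℕ => (∑ j ∈ Icc 1 n, a j) / n) atTop (𝓝 L)) :
    Tendsto (fun t => (∫ u in (0 : ℝ)..t, a ⌊u⌋) / t) atTop (𝓝 L) := by
  refine tendsto_div_atTop_of_tendsto_natCast_div ?_ fun n t hnt htn => ?_
  · rw [← tendsto_add_atTop_iff_nat 1]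
    refine (tendsto_const_add_div_succ_of_tendsto_div (a 0) h).congr fun n => ?_
    rw [integral_comp_floor_zero_natCast, range_eq_Ico, sum_eq_sum_Ico_succ_bot (by omega),
      Ico_add_one_right_eq_Icc]
    simp only [Nat.cast_add, Nat.cast_one, Nat.cast_zero]
  · have hsub (s : ℝ) : (∫ u in (0 : ℝ)..s, a ⌊u⌋) - ∫ u in (0 : ℝ)..n, a ⌊u⌋ =
        ∫ u in (n : ℝ)..s, a ⌊u⌋ :=
      integral_interval_sub_left (intervalIntegrable_comp_floor a _ _)
        (intervalIntegrable_comp_floor a _ _)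
    rw [hsub, hsub, integral_comp_floor_of_le_of_le a (k := n) (by simp) hnt (by simpa using htn),
      integral_comp_floor_of_le_of_le a (k := n) (by simp) (by simp) (by simp), abs_mul,
      add_sub_cancel_left, one_mul]
    exact mul_le_of_le_one_left (abs_nonneg _) (abs_le.2 ⟨by linarith, by linarith⟩)

theorem tendsto_integral_neg_comp_floor_div_atTop
    (h : Tendsto (fun n : ℕ => (∑ j ∈ Icc 1 n, a (-j)) / n) atTop (𝓝 L)) :
    Tendsto (fun t => (∫ u in -t..0, a ⌊u⌋) / t) atTop (𝓝 L) := by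
  refine tendsto_div_atTop_of_tendsto_natCast_div ?_ fun n t hnt htn => ?_
  · simpa only [integral_comp_floor_neg_natCast_zero] using h
  · have hsub (s : ℝ) : (∫ u in -s..0, a ⌊u⌋) - ∫ u in (-n : ℝ)..0, a ⌊u⌋ =
        ∫ u in -s..(-n), a ⌊u⌋ := by
      rw [sub_eq_iff_eq_add, integral_add_adjacent_intervals
        (intervalIntegrable_comp_floor a _ _) (intervalIntegrable_comp_floor a _ _)]
    rw [hsub, hsub, integral_comp_floor_of_le_of_le a (k := -(n + 1)) (by push_cast; linarith)
        (by linarith) (by push_cast; linarith),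
      integral_comp_floor_of_le_of_le a (k := -(n + 1)) (by simp) (by simp) (by simp), abs_mul,
      neg_sub_neg, show -(n : ℝ) - -(n + 1) = 1 by ring, one_mul]
    exact mul_le_of_le_one_left (abs_nonneg _) (abs_le.2 ⟨by linarith, by linarith⟩)

theorem tendsto_integral_comp_floor_div_atBot
    (h : Tendsto (fun n : ℕ => (∑ j ∈ Icc 1 n, a (-j)) / n) atTop (𝓝 L)) :
    Tendsto (fun t => (∫ u in (0 : ℝ)..t, a ⌊u⌋) / t) atBot (𝓝 L) := by
  refine ((tendsto_integral_neg_comp_floor_div_atTop h).comp tendsto_neg_atBot_atTop).congr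
    fun t => ?_
  rw [Function.comp_apply, neg_neg, integral_symm t 0, div_neg, neg_div]

theorem integral_comp_floor_mul {T : ℝ} (hT : T ≠ 0) (x y : ℝ) :
    ∫ u in x..y, a ⌊T * u⌋ =
      ((∫ u in (0 : ℝ)..T * y, a ⌊u⌋) - ∫ u in (0 : ℝ)..T * x, a ⌊u⌋) / T := by
  rw [integral_comp_mul_left (fun u => a ⌊u⌋) hT, integral_interval_sub_left
    (intervalIntegrable_comp_floor a _ _) (intervalIntegrable_comp_floor a _ _), smul_eq_mul,
    inv_mul_eq_div]

end FloorStep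

theorem cesaro_to_integral_average_general
    (p : ℤ → ℝ) (γ : ℝ)
    (h1 : Tendsto (fun n : ℕ => (1 / (n : ℝ)) * ∑ j ∈ Finset.Icc 1 n, 1 / p (j : ℤ))
      atTop (nhds (2 * γ)))
    (h2 : Tendsto (fun n : ℕ => (1 / (n : ℝ)) * ∑ j ∈ Finset.Icc 1 n, 1 / p (-(j : ℤ)))
      atTop (nhds (2 * γ))) :
    ∀ x y : ℝ, x < y →
      Tendsto (fun T : ℝ => (1 / (y - x)) * ∫ u in x..y, 1 / p ⌊T * u⌋)
        atTop (nhds (2 * γ)) := by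
  intro x y hxy
  simp only [one_div_mul_eq_div] at h1 h2
  have hscaled := tendsto_comp_mul_div_atTop (F := fun t => ∫ u in (0 : ℝ)..t, 1 / p ⌊u⌋)
    (tendsto_integral_comp_floor_div_atTop (a := fun j => 1 / p j) h1)
    (tendsto_integral_comp_floor_div_atBot (a := fun j => 1 / p j) h2)
  have hlim := ((hscaled y).sub (hscaled x)).const_mul (1 / (y - x))
  have hyx : y - x ≠ 0 := sub_ne_zero.2 hxy.ne'
  rw [← mul_sub, show 1 / (y - x) * (2 * γ * (y - x)) = 2 * γ by field_simp] at hlim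
  refine hlim.congr' ?_
  filter_upwards [eventually_ne_atTop 0] with T hT
  rw [integral_comp_floor_mul (a := fun j => 1 / p j) hT, sub_div]

/-- If the two one-sided Cesàro averages of `1/p` converge to `2γ`,
then for all `x < y`, `(1/(y−x)) ∫_x^y 1/p_{⌊Tu⌋} du → 2γ` as `T → ∞`. -/
theorem cesaro_to_integral_average
    (p : ℤ → ℝ) (hp : ∀ j, 0 < p j ∧ p j ≤ 1/2) (γ : ℝ)
    (h1 : Tendsto (fun n : ℕ => (1 / (n : ℝ)) * ∑ j ∈ Finset.Icc 1 n, 1 / p (j : ℤ))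
      atTop (nhds (2 * γ)))
    (h2 : Tendsto (fun n : ℕ => (1 / (n : ℝ)) * ∑ j ∈ Finset.Icc 1 n, 1 / p (-(j : ℤ)))
      atTop (nhds (2 * γ))) :
    ∀ x y : ℝ, x < y →
      Tendsto (fun T : ℝ => (1 / (y - x)) * ∫ u in x..y, 1 / p ⌊T * u⌋)
        atTop (nhds (2 * γ)) :=
  cesaro_to_integral_average_general p γ h1 h2
end
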